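/- Let H and K be complex Hilbert spaces, φ : B(H) → B(K) a unital completely positive linear map, and U ∈ B(H) a unitary operator. Then for every positive integer d, the d-tuple (φ(U), φ(U²), …, φ(U^d)) is Toeplitz-contractive. -/

import Mathlib

/-!
For a unitary `U`, the `(i, j)` entry of the Toeplitz matrix of `(U, U², …, U^d)` is
`U^i (U^j)*`, so the matrix is `[A_i A_j*]` with `A_i = U^i` and hence positive. A ucp map `φ`
sends it entrywise to a positive matrix, and this image is the Toeplitz matrix of
`(φ(U), …, φ(U^d))` because `φ(1) = 1` and `φ(V*) = φ(V)*` for every isometry `V`. The last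
identity holds because `φ` maps the positive matrix `[[1, V], [V*, 1]]` to a positive, hence
self-adjoint, block matrix.
-/

open scoped ComplexOrder

noncomputable section

variable {H : Type*} [NormedAddCommGroup H] [InnerProductSpace ℂ H] [CompleteSpace H]

/-- The `(i, j)` entry of the `(d+1) × (d+1)` block Toeplitz operator matrix associated to a
`d`-tuple `T` of bounded operators on `H`, with diagonal entries `α • 1`: it is `α • 1` if
`i = j`, `T_{i-j}` if `i > j`, and `(T_{j-i})*` if `i < j`. -/
def tEntry {d : ℕ} (T : Fin d → H →L[ℂ] H) (α : ℂ) (i j : Fin (d + 1)) : H →L[ℂ] H :=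
  if _h1 : (i : ℕ) = (j : ℕ) then α • (1 : H →L[ℂ] H)
  else if _h2 : (j : ℕ) < (i : ℕ) then
    T ⟨(i : ℕ) - (j : ℕ) - 1, by have := i.isLt; omega⟩
  else
    ContinuousLinearMap.adjoint (T ⟨(j : ℕ) - (i : ℕ) - 1, by have := j.isLt; omega⟩)

/-- Positivity of a block operator matrix `M`, expressed through its quadratic form on the
direct sum of copies of `H`: for every vector `x = (x_i)`, `∑ i j, ⟪M i j (x j), x i⟫ ≥ 0`. -/
def IsPosBlockMatrix {ι : Type*} [Fintype ι] (M : ι → ι → (H →L[ℂ] H)) : Prop :=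
  ∀ x : ι → H, 0 ≤ ∑ i, ∑ j, (inner ℂ (M i j (x j)) (x i) : ℂ)

/-- A `d`-tuple of operators is Toeplitz-contractive if its block Toeplitz operator matrix
(with 1's on the diagonal) is a positive operator on `⊕_1^{d+1} H`. -/
def ToeplitzContractive {d : ℕ} (T : Fin d → H →L[ℂ] H) : Prop :=
  IsPosBlockMatrix (tEntry T 1)

variable {K : Type*} [NormedAddCommGroup K] [InnerProductSpace ℂ K] [CompleteSpace K]

/-- A linear map `φ : B(H) → B(K)` is unital completely positive if `φ(1) = 1` and, for every
`p`, applying `φ` entrywise to a positive `p × p` block operator matrix over `B(H)` yields a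
positive `p × p` block operator matrix over `B(K)`. -/
def IsUCP (φ : (H →L[ℂ] H) →ₗ[ℂ] (K →L[ℂ] K)) : Prop :=
  φ 1 = 1 ∧
    ∀ (p : ℕ) (M : Fin p → Fin p → (H →L[ℂ] H)),
      IsPosBlockMatrix M → IsPosBlockMatrix fun i j => φ (M i j)

section BlockMatrix

variable {E : Type*} [NormedAddCommGroup E] [InnerProductSpace ℂ E] {ι : Type*} [Fintype ι]

def blockMatrixToLin (M : ι → ι → E →L[ℂ] E) :
    PiLp 2 (fun _ : ι => E) →ₗ[ℂ] PiLp 2 (fun _ : ι => E) where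
  toFun x := WithLp.toLp 2 fun i => ∑ j, M i j (x j)
  map_add' x y := by ext i; simp [Finset.sum_add_distrib]
  map_smul' c x := by ext i; simp [Finset.smul_sum]

lemma blockMatrixToLin_apply (M : ι → ι → E →L[ℂ] E) (x : PiLp 2 (fun _ : ι => E)) (i : ι) :
    blockMatrixToLin M x i = ∑ j, M i j (x j) := rfl

lemma IsPosBlockMatrix.isSymmetric_blockMatrixToLin {M : ι → ι → E →L[ℂ] E}
    (hM : IsPosBlockMatrix M) : (blockMatrixToLin M).IsSymmetric := by
  refine (LinearMap.isSymmetric_iff_inner_map_self_real _).2 fun x => ?_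
  have hx : inner ℂ (blockMatrixToLin M x) x = ∑ i, ∑ j, inner ℂ (M i j (x j)) (x i) := by
    simp only [PiLp.inner_apply, blockMatrixToLin_apply, sum_inner]
  rw [Complex.conj_eq_iff_im, hx]
  exact (Complex.nonneg_iff.1 (hM x)).2.symm

lemma IsPosBlockMatrix.apply_eq_adjoint [CompleteSpace E] [DecidableEq ι]
    {M : ι → ι → E →L[ℂ] E} (hM : IsPosBlockMatrix M) (i j : ι) :
    M j i = ContinuousLinearMap.adjoint (M i j) := by
  refine (ContinuousLinearMap.eq_adjoint_iff _ _).2 fun u v => ?_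
  have := hM.isSymmetric_blockMatrixToLin.conj_inner_sym (PiLp.single 2 j v) (PiLp.single 2 i u)
  simpa [PiLp.inner_apply, blockMatrixToLin_apply, PiLp.single_apply, apply_ite] using this.symm

lemma isPosBlockMatrix_mul_star [CompleteSpace E] (A : ι → E →L[ℂ] E) :
    IsPosBlockMatrix fun i j => A i * star (A j) := by
  intro x
  have hterm : ∀ i j, inner ℂ ((A i * star (A j)) (x j)) (x i)
      = inner ℂ (star (A j) (x j)) (star (A i) (x i)) := fun i j => by
    rw [mul_apply_eq_comp, ContinuousLinearMap.star_eq_adjoint,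
      ContinuousLinearMap.star_eq_adjoint, ContinuousLinearMap.adjoint_inner_right]
  simp_rw [hterm, ← sum_inner, ← inner_sum, inner_self_eq_norm_sq_to_K]
  positivity

lemma isPosBlockMatrix_of_star_mul_self_eq_one [CompleteSpace E] {V : E →L[ℂ] E}
    (hV : star V * V = 1) : IsPosBlockMatrix ![![1, V], ![star V, 1]] := by
  convert isPosBlockMatrix_mul_star ![1, star V] using 1
  ext i j : 2
  fin_cases i <;> fin_cases j <;> simp [hV]

end BlockMatrix

lemma IsUCP.map_star_of_star_mul_self_eq_one {φ : (H →L[ℂ] H) →ₗ[ℂ] (K →L[ℂ] K)} (hφ : IsUCP φ)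
    {V : H →L[ℂ] H} (hV : star V * V = 1) : φ (star V) = star (φ V) := by
  have hpos := hφ.2 2 _ (isPosBlockMatrix_of_star_mul_self_eq_one hV)
  simpa [ContinuousLinearMap.star_eq_adjoint] using hpos.apply_eq_adjoint 0 1

lemma tEntry_map {d : ℕ} (φ : (H →L[ℂ] H) →ₗ[ℂ] (K →L[ℂ] K)) (hφ₁ : φ 1 = 1)
    {T : Fin d → H →L[ℂ] H}
    (hφT : ∀ k, φ (ContinuousLinearMap.adjoint (T k)) = ContinuousLinearMap.adjoint (φ (T k)))
    (α : ℂ) (i j : Fin (d + 1)) : tEntry (fun k => φ (T k)) α i j = φ (tEntry T α i j) := by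
  unfold tEntry
  split_ifs <;> simp [hφ₁, hφT]

lemma Unitary.pow_mul_star_pow_of_le {R : Type*} [Monoid R] [StarMul R] {U : R}
    (hU : U ∈ unitary R) {m n : ℕ} (h : n ≤ m) : U ^ m * star (U ^ n) = U ^ (m - n) := by
  rw [← Nat.sub_add_cancel h, pow_add, mul_assoc, Unitary.mul_star_self_of_mem (pow_mem hU n),
    mul_one, Nat.add_sub_cancel]

lemma tEntry_pow_of_mem_unitary {d : ℕ} {U : H →L[ℂ] H} (hU : U ∈ unitary (H →L[ℂ] H))
    (i j : Fin (d + 1)) :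
    tEntry (fun k : Fin d => U ^ ((k : ℕ) + 1)) 1 i j = U ^ (i : ℕ) * star (U ^ (j : ℕ)) := by
  unfold tEntry
  split_ifs with hij hji
  · rw [one_smul, hij, Unitary.pow_mul_star_pow_of_le hU le_rfl, Nat.sub_self, pow_zero]
  · rw [Unitary.pow_mul_star_pow_of_le hU hji.le]
    dsimp only
    congr 1
    omega
  · rw [← ContinuousLinearMap.star_eq_adjoint, ← star_star (U ^ (i : ℕ)), ← star_mul,
      Unitary.pow_mul_star_pow_of_le hU (by omega)]
    dsimp only
    congr 2
    omega

lemma toeplitzContractive_pow_of_mem_unitary {d : ℕ} {U : H →L[ℂ] H}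
    (hU : U ∈ unitary (H →L[ℂ] H)) : ToeplitzContractive fun k : Fin d => U ^ ((k : ℕ) + 1) := by
  unfold ToeplitzContractive
  simp_rw [funext₂ (tEntry_pow_of_mem_unitary hU)]
  exact isPosBlockMatrix_mul_star _

theorem toeplitzContractive_ucp_image_of_unitary
    (φ : (H →L[ℂ] H) →ₗ[ℂ] (K →L[ℂ] K)) (hφ : IsUCP φ)
    (U : H →L[ℂ] H) (hU : U ∈ unitary (H →L[ℂ] H))
    (d : ℕ) :
    ToeplitzContractive (fun k : Fin d => φ (U ^ ((k : ℕ) + 1))) := by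
  have hφU : ∀ k : Fin d, φ (ContinuousLinearMap.adjoint (U ^ ((k : ℕ) + 1)))
      = ContinuousLinearMap.adjoint (φ (U ^ ((k : ℕ) + 1))) := fun k =>
    hφ.map_star_of_star_mul_self_eq_one (Unitary.star_mul_self_of_mem (pow_mem hU _))
  unfold ToeplitzContractive
  simp_rw [funext₂ (tEntry_map φ hφ.1 hφU 1)]
  exact hφ.2 _ _ (toeplitzContractive_pow_of_mem_unitary hU)
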